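/- Fix j ≥ 1 and s ≥ j, write s = qj + r with 0 ≤ r < j, and set α = ∑_{i=0}^{q−1}(r + ij + 1). Let g_{j,s} and g_{j,r} denote the solutions of the generalized Golomb recursion g(n) = g(n − s − g(n−j)) + j with λ = 1 and parameters (j, s) and (j, r) respectively (given explicitly as the block sequences with value mj + 1 repeated s + mj + 1 times, resp. r + mj + 1 times). Then for all n ≥ 1, g_{j,s}(n) = g_{j,r}(n + α) − qj. -/

import Mathlib

def golombThresh (j s m : ℕ) : ℕ := 1 + ∑ i ∈ Finset.range m, (s + i * j + 1)

def golombW (j s n : ℕ) : ℕ :=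
  j * Nat.findGreatest (fun m => golombThresh j s m ≤ n) n + 1

theorem Nat.findGreatest_le_eq_iff_of_strictMono {f : ℕ → ℕ} (hf : StrictMono f) {n M : ℕ}
    (h0 : f 0 ≤ n) :
    Nat.findGreatest (fun m => f m ≤ n) n = M ↔ f M ≤ n ∧ n < f (M + 1) := by
  rw [Nat.findGreatest_eq_iff]
  constructor
  · rintro ⟨-, hpos, hmax⟩
    have hfM : f M ≤ n := by
      rcases Nat.eq_zero_or_pos M with rfl | hM
      · exact h0
      · exact hpos hM.ne'
    refine ⟨hfM, lt_of_not_ge fun hsucc => hmax M.lt_succ_self ?_ hsucc⟩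
    exact (hf.id_le (M + 1)).trans hsucc
  · rintro ⟨hfM, hsucc⟩
    refine ⟨(hf.id_le M).trans hfM, fun _ => hfM, fun m hMm _ hfm => ?_⟩
    exact absurd (hsucc.trans_le ((hf.monotone hMm).trans hfm)) (lt_irrefl n)

theorem golombThresh_strictMono (j s : ℕ) : StrictMono (golombThresh j s) :=
  strictMono_nat_of_lt_succ fun m => by
    simp only [golombThresh, Finset.sum_range_succ]
    omega

/-- The first `q` blocks of `g_{j,r}` have lengths `r + ij + 1`, `i < q`, and the following ones
are exactly the blocks of `g_{j,s}`. -/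
theorem golombThresh_add_of_eq (j s q r : ℕ) (hqr : s = q * j + r) (m : ℕ) :
    golombThresh j r (q + m) =
      (∑ i ∈ Finset.range q, (r + i * j + 1)) + golombThresh j s m := by
  have hblock : ∀ i, r + (q + i) * j + 1 = s + i * j + 1 := fun i => by subst hqr; ring
  simp only [golombThresh, Finset.sum_range_add, hblock]
  ring

theorem golombW_reduce_general (j s q r α : ℕ)
    (hqr : s = q * j + r)
    (hα : α = ∑ i ∈ Finset.range q, (r + i * j + 1)) :
    ∀ n, 1 ≤ n → golombW j s n = golombW j r (n + α) - q * j := by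
  intro n hn
  set M := Nat.findGreatest (fun m => golombThresh j s m ≤ n) n with hM
  have hshift : ∀ m, golombThresh j r (q + m) = α + golombThresh j s m :=
    hα ▸ golombThresh_add_of_eq j s q r hqr
  obtain ⟨hlo, hhi⟩ := (Nat.findGreatest_le_eq_iff_of_strictMono (golombThresh_strictMono j s)
    (by simpa [golombThresh] using hn)).1 hM.symm
  have hindex : Nat.findGreatest (fun m => golombThresh j r m ≤ n + α) (n + α) = q + M := by
    rw [Nat.findGreatest_le_eq_iff_of_strictMono (golombThresh_strictMono j r)
      (by simp only [golombThresh, Finset.range_zero, Finset.sum_empty]; omega),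
      add_assoc, hshift, hshift]
    omega
  rw [golombW, golombW, hindex, ← hM, mul_add, mul_comm j q]
  omega

/-- Reduction of parameters: for `s = qj + r ≥ j` with `0 ≤ r < j` and
    `α = ∑_{i=0}^{q−1} (r + ij + 1)`, one has `g_{j,s}(n) = g_{j,r}(n + α) − qj`. -/
theorem golombW_reduce (j s q r α : ℕ) (hj : 1 ≤ j) (hs : j ≤ s)
    (hqr : s = q * j + r) (hr : r < j)
    (hα : α = ∑ i ∈ Finset.range q, (r + i * j + 1)) :
    ∀ n, 1 ≤ n → golombW j s n = golombW j r (n + α) - q * j :=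
  golombW_reduce_general j s q r α hqr hα
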